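/- Let I be a set, U an ultrafilter on I, ⟨A_i : i ∈ I⟩ a family of nonempty sets, and k a natural number. Let ĥ be a k-dimensional choice function on A = ∏_{i∈I} A_i / U with induced ultratopology C on ᵏA, and let B = ∏_{i∈I} ᵏA_i / U. Then there exists a 1-dimensional choice function on B whose induced ultratopology D on B is homeomorphic to C; indeed, the natural bijection φ : ᵏA → B given by φ(⟨s⁰/U, …, s^{k−1}/U⟩) = ⟨⟨s⁰(i), …, s^{k−1}(i)⟩ : i ∈ I⟩ / U is a homeomorphism from (ᵏA, C) onto (B, D). -/

import Mathlib

/-!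
The hat map `c` descends to the natural map `φ a = (c a)/U` from `ᵏA` to `B`, whose
inverse is coordinatewise transposition `g/U ↦ ⟨(fun i => g i j)/U : j < k⟩`: composing
the other way round is the identity because the finitely many sets `{i | c a i j = g i j}`
all lie in `U`. Taking `d = c ∘ φ⁻¹` gives `c = d ∘ φ`, and for any surjection `f` the
ultratopology of `d` is the quotient of that of `d ∘ f` along `f`, since `T(f⁻¹ S, a)`
computed with `d ∘ f` is `T(S, f a)` computed with `d`.
-/

open Set

/-- The setoid on the product `∀ i, A i` identifying functions that agree on a set
in the ultrafilter `U`; its quotient is the ultraproduct `∏ A i / U`. -/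
def upSetoid {I : Type*} (U : Ultrafilter I) (A : I → Type*) : Setoid (∀ i, A i) where
  r f g := {i | f i = g i} ∈ U
  iseqv := by
    refine ⟨fun f => ?_, fun {f g} h => ?_, fun {f g h} hfg hgh => ?_⟩
    · exact Filter.univ_mem' fun i => rfl
    · exact Filter.mem_of_superset h fun i hi => (hi : f i = g i).symm
    · exact Filter.mem_of_superset (Filter.inter_mem hfg hgh) fun i hi =>
        (hi.1 : f i = g i).trans hi.2

/-- Given a "hat" map `c` assigning to each point of `Y` a representative
in `∀ i, X i`, the set `T(R, a) = { i ∈ I : ∃ b ∈ R, b̂(i) = â(i) }`. -/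
def tset {I : Type*} {X : I → Type*} {Y : Type*} (c : Y → ∀ i, X i)
    (R : Set Y) (a : Y) : Set I :=
  {i | ∃ b ∈ R, c b i = c a i}

/-- The ultratopology induced by the hat map `c`: closed sets are exactly the
`R` such that `T(R,a) ∈ U` implies `a ∈ R`. -/
def ultraTop {I : Type*} (U : Ultrafilter I) {X : I → Type*} {Y : Type*}
    (c : Y → ∀ i, X i) : TopologicalSpace Y :=
  TopologicalSpace.ofClosed {R | ∀ a, tset c R a ∈ U → a ∈ R}
    (by
      intro a ha
      have h : tset c (∅ : Set Y) a = ∅ := by ext i; simp [tset]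
      rw [h] at ha
      exact absurd ha (Filter.empty_notMem _))
    (by
      intro S hS a ha
      exact Set.mem_sInter.2 fun R hR => hS hR a
        (Filter.mem_of_superset ha fun i hi => by
          obtain ⟨b, hb, he⟩ := hi
          exact ⟨b, hb R hR, he⟩))
    (by
      intro R hR S hS a ha
      have h : tset c (R ∪ S) a = tset c R a ∪ tset c S a := by
        ext i; simp [tset, Set.mem_union, or_and_right, exists_or]
      rw [h] at ha
      rcases (Ultrafilter.union_mem_iff.1 ha) with h' | h'
      · exact Or.inl (hR a h')
      · exact Or.inr (hS a h'))

open Topology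

section UltraTop

variable {I : Type*} (U : Ultrafilter I) {X : I → Type*} {Y Z : Type*}

theorem isClosed_ultraTop_iff (c : Y → ∀ i, X i) (R : Set Y) :
    IsClosed[ultraTop U c] R ↔ ∀ a, tset c R a ∈ U → a ∈ R := by
  rw [← @isOpen_compl_iff _ _ (ultraTop U c)]
  change (∀ a, tset c Rᶜᶜ a ∈ U → a ∈ Rᶜᶜ) ↔ _
  rw [compl_compl]

theorem tset_comp_preimage {f : Y → Z} (hf : Function.Surjective f) (c : Z → ∀ i, X i)
    (S : Set Z) (a : Y) : tset (c ∘ f) (f ⁻¹' S) a = tset c S (f a) := by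
  ext i
  constructor
  · rintro ⟨b, hb, hi⟩
    exact ⟨f b, hb, hi⟩
  · rintro ⟨z, hz, hi⟩
    obtain ⟨b, rfl⟩ := hf z
    exact ⟨b, hz, hi⟩

theorem isQuotientMap_ultraTop_comp {f : Y → Z} (hf : Function.Surjective f)
    (c : Z → ∀ i, X i) : @IsQuotientMap Y Z (ultraTop U (c ∘ f)) (ultraTop U c) f := by
  let := ultraTop U (c ∘ f)
  let := ultraTop U c
  refine isQuotientMap_iff_isClosed.2 ⟨hf, fun S => ?_⟩
  simp_rw [isClosed_ultraTop_iff, tset_comp_preimage hf, mem_preimage]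
  exact ⟨fun h a => h (f a), fun h z => by obtain ⟨a, rfl⟩ := hf z; exact h a⟩

end UltraTop

section Transpose

variable {I : Type*} (U : Ultrafilter I) (A : I → Type*) {J : Type*}

def upTranspose : Quotient (upSetoid U fun i => J → A i) → J → Quotient (upSetoid U A) :=
  Quotient.lift (fun g j => Quotient.mk (upSetoid U A) fun i => g i j) fun _ _ h =>
    funext fun j => Quotient.sound <| Filter.mem_of_superset h fun _ hi => congrFun hi j

variable {U A}

variable {c : (J → Quotient (upSetoid U A)) → ∀ i, J → A i}

theorem upTranspose_mk_hat (hc : ∀ a j, Quotient.mk (upSetoid U A) (fun i => c a i j) = a j)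
    (a : J → Quotient (upSetoid U A)) :
    upTranspose U A (Quotient.mk (upSetoid U fun i => J → A i) (c a)) = a :=
  funext (hc a)

theorem mk_hat_upTranspose [Finite J]
    (hc : ∀ a j, Quotient.mk (upSetoid U A) (fun i => c a i j) = a j)
    (b : Quotient (upSetoid U fun i => J → A i)) :
    Quotient.mk (upSetoid U fun i => J → A i) (c (upTranspose U A b)) = b := by
  induction b using Quotient.ind with
  | _ g =>
    set a := upTranspose U A (Quotient.mk _ g) with ha
    have hcoord : ∀ j, {i | c a i j = g i j} ∈ U := fun j =>
      Quotient.exact ((hc a j).trans (congrFun ha j) : Quotient.mk (upSetoid U A) _ = _)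
    exact Quotient.sound <| Filter.mem_of_superset (Filter.iInter_mem.2 hcoord) fun i hi =>
      funext (mem_iInter.1 hi)

end Transpose

theorem kdim_ultratopology_homeomorphic_onedim_general {I : Type*} (U : Ultrafilter I)
    (A : I → Type*) (k : ℕ)
    (c : (Fin k → Quotient (upSetoid U A)) → ∀ i, Fin k → A i)
    (hc : ∀ a j, Quotient.mk (upSetoid U A) (fun i => c a i j) = a j) :
    ∃ (d : Quotient (upSetoid U fun i => Fin k → A i) → ∀ i, Fin k → A i)
      (φ : (Fin k → Quotient (upSetoid U A)) →
          Quotient (upSetoid U fun i => Fin k → A i)),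
      (∀ b, Quotient.mk (upSetoid U fun i => Fin k → A i) (d b) = b) ∧
      (∀ s : Fin k → ∀ i, A i,
        φ (fun j => Quotient.mk (upSetoid U A) (s j)) =
          Quotient.mk (upSetoid U fun i => Fin k → A i) (fun i j => s j i)) ∧
      @IsHomeomorph _ _ (ultraTop U c) (ultraTop U d) φ := by
  let φ a := Quotient.mk (upSetoid U fun i => Fin k → A i) (c a)
  let d := c ∘ upTranspose U A
  have hφ : Function.Bijective φ := Function.bijective_iff_has_inverse.2
    ⟨upTranspose U A, upTranspose_mk_hat hc, mk_hat_upTranspose hc⟩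
  have hdφ : d ∘ φ = c := funext fun a => congrArg c (upTranspose_mk_hat hc a)
  refine ⟨d, φ, mk_hat_upTranspose hc, fun s => ?_, ?_⟩
  · exact mk_hat_upTranspose hc (Quotient.mk _ fun i j => s j i)
  · have hquot := isQuotientMap_ultraTop_comp U hφ.2 d
    rw [hdφ] at hquot
    exact @isHomeomorph_iff_isQuotientMap_injective _ _ (ultraTop U c) (ultraTop U d) φ
      |>.2 ⟨hquot, hφ.1⟩

/-- Given a `k`-dimensional choice function `c` on
`A = ∏ᵢ Aᵢ / U` with induced ultratopology `C` on `ᵏA`, there is a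
1-dimensional choice function `d` on `B = ∏ᵢ ᵏAᵢ / U` such that the natural
bijection `φ : ᵏA → B` (determined by
`φ(⟨s⁰/U, …, s^{k-1}/U⟩) = ⟨⟨s⁰(i), …, s^{k-1}(i)⟩ : i ∈ I⟩/U`)
is a homeomorphism from `(ᵏA, C)` onto `(B, D)`, where `D` is the
ultratopology induced by `d`. -/
theorem kdim_ultratopology_homeomorphic_onedim {I : Type*} (U : Ultrafilter I)
    (A : I → Type*) [∀ i, Nonempty (A i)] (k : ℕ)
    (c : (Fin k → Quotient (upSetoid U A)) → ∀ i, Fin k → A i)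
    (hc : ∀ a j, Quotient.mk (upSetoid U A) (fun i => c a i j) = a j) :
    ∃ (d : Quotient (upSetoid U fun i => Fin k → A i) → ∀ i, Fin k → A i)
      (φ : (Fin k → Quotient (upSetoid U A)) →
          Quotient (upSetoid U fun i => Fin k → A i)),
      (∀ b, Quotient.mk (upSetoid U fun i => Fin k → A i) (d b) = b) ∧
      (∀ s : Fin k → ∀ i, A i,
        φ (fun j => Quotient.mk (upSetoid U A) (s j)) =
          Quotient.mk (upSetoid U fun i => Fin k → A i) (fun i j => s j i)) ∧
      @IsHomeomorph _ _ (ultraTop U c) (ultraTop U d) φ :=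
  kdim_ultratopology_homeomorphic_onedim_general U A k c hc
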